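/- arXiv:2508.06875 — 3 statements merged into one kernel-verified Lean document; each statement's English description precedes it below -/
import Mathlib

section
/- Let σ, ω ∈ Ψ^* with σ_L ⪯ ω_L and σ_y ⪯ ω_y (equivalently, the approximate square of ω is contained in that of σ). Then: (i) if |ω_L| = |σ_L| + 1, then 0 ≤ |ω| − |σ| ≤ A_1; (ii) if |ω_L| − |σ_L| ≥ A_2, then |ω| ≥ |σ| + 1. -/
open Filter MeasureTheory
open scoped BigOperators ENNReal NNReal Topology

namespace LGQ

noncomputable section

/-- The alphabet `G = {(i,j) : 1 ≤ i ≤ n_j, 1 ≤ j ≤ m}`, encoded as a sigma type: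
an element is `⟨j, i⟩` with `j : Fin m` (the `y`-coordinate) and `i : Fin (n j)`. -/
abbrev Alph (m : ℕ) (n : Fin m → ℕ) := Σ j : Fin m, Fin (n j)

/-- A pair `σ = (σ_L, σ_R)` with `σ_L ∈ G^*` and `σ_R ∈ G_y^*`. -/
abbrev Wd (m : ℕ) (n : Fin m → ℕ) := List (Alph m n) × List (Fin m)

variable {m : ℕ} {n : Fin m → ℕ}

/-- `a_ω := ∏ a_{i_h j_h}` along a word `ω ∈ G^*`. -/
def aP (a : Alph m n → ℝ) (w : List (Alph m n)) : ℝ := (w.map a).prod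

/-- `b_τ := ∏ b_{j_h}` along a word `τ ∈ G_y^*`. -/
def bP (b : Fin m → ℝ) (τ : List (Fin m)) : ℝ := (τ.map b).prod

/-- `σ_y := (σ_L)_y ∗ σ_R` : the `y`-word of a pair `σ = σ_L ∗ σ_R`. -/
def sy (σ : Wd m n) : List (Fin m) := σ.1.map Sigma.fst ++ σ.2

/-- `Ψ_l := {σ = σ_L ∗ σ_R : σ_L ∈ G^l, σ_R ∈ G_y^*, b_{(σ_y)^-} ≥ a_{σ_L} > b_{σ_y}}`. -/
def Psi (a : Alph m n → ℝ) (b : Fin m → ℝ) (l : ℕ) : Set (Wd m n) :=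
  {σ | σ.1.length = l ∧ 1 ≤ σ.2.length ∧
    aP a σ.1 ≤ bP b (sy σ).dropLast ∧ bP b (sy σ) < aP a σ.1}

/-- `Ψ^* := ⋃_{l ≥ 1} Ψ_l`. -/
def PsiStar (a : Alph m n → ℝ) (b : Fin m → ℝ) : Set (Wd m n) :=
  {σ | ∃ l, 1 ≤ l ∧ σ ∈ Psi a b l}

/-- `q_j := Σ_{i=1}^{n_j} p_{ij}`. -/
def qf (p : Alph m n → ℝ) (j : Fin m) : ℝ := ∑ i : Fin (n j), p ⟨j, i⟩

/-- `p_{σ_L} := ∏ p_{i_h j_h}`. -/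
def pP (p : Alph m n → ℝ) (w : List (Alph m n)) : ℝ := (w.map p).prod

/-- `q_{σ_R} := ∏ q_{j_h}`. -/
def qP (p : Alph m n → ℝ) (τ : List (Fin m)) : ℝ := (τ.map (qf p)).prod

/-- `E_r(σ) := p_{σ_L} q_{σ_R} a_{σ_L}^r` (note `E_r(θ) = 1`). -/
def Er (a p : Alph m n → ℝ) (r : ℝ) (σ : Wd m n) : ℝ :=
  pP p σ.1 * qP p σ.2 * aP a σ.1 ^ r

/-- `a̲ := min a_{ij}`. -/
def aLo (a : Alph m n → ℝ) : ℝ := ⨅ g, a g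

/-- `ā := max a_{ij}`. -/
def aHi (a : Alph m n → ℝ) : ℝ := ⨆ g, a g

/-- `b̲ := min b_j`. -/
def bLo (b : Fin m → ℝ) : ℝ := ⨅ j, b j

/-- `b̄ := max b_j`. -/
def bHi (b : Fin m → ℝ) : ℝ := ⨆ j, b j

/-- `p̲ := min p_{ij}`. -/
def pLo (p : Alph m n → ℝ) : ℝ := ⨅ g, p g

/-- `q̲ := min q_j`. -/
def qLo (p : Alph m n → ℝ) : ℝ := ⨅ j, qf p j

/-- `A_1 := ⌊log a̲ / log b̄⌋ + 1`. -/
def A1 (a : Alph m n → ℝ) (b : Fin m → ℝ) : ℤ :=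
  ⌊Real.log (aLo a) / Real.log (bHi b)⌋ + 1

/-- `A_2 := ⌊log b̲ / log ā⌋ + 1`. -/
def A2 (a : Alph m n → ℝ) (b : Fin m → ℝ) : ℤ :=
  ⌊Real.log (bLo b) / Real.log (aHi a)⌋ + 1

/-- `A_3 := max_{(i,j)∈G} a_{ij}/b_j`. -/
def A3 (a : Alph m n → ℝ) (b : Fin m → ℝ) : ℝ := ⨆ g : Alph m n, a g / b g.1

/-- `A_4 := log A_3 / log b̲`. -/
def A4 (a : Alph m n → ℝ) (b : Fin m → ℝ) : ℝ := Real.log (A3 a b) / Real.log (bLo b)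

/-- `A_6 := ⌊1/A_4⌋`. -/
def A6 (a : Alph m n → ℝ) (b : Fin m → ℝ) : ℤ := ⌊1 / A4 a b⌋

/-- `η̲_r := p̲ q̲^{A_1} a̲^r`. -/
def etaLo (a : Alph m n → ℝ) (b : Fin m → ℝ) (p : Alph m n → ℝ) (r : ℝ) : ℝ :=
  pLo p * qLo p ^ A1 a b * aLo a ^ r

/-- `A_{5,r} := ⌊log(q̲² η̲_r)/(r·log ā)⌋`. -/
def A5 (a : Alph m n → ℝ) (b : Fin m → ℝ) (p : Alph m n → ℝ) (r : ℝ) : ℤ :=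
  ⌊Real.log (qLo p ^ 2 * etaLo a b p r) / (r * Real.log (aHi a))⌋

/-- `T_{1,r} := ⌊(A_1 + A_{5,r} + 3)/A_4⌋`. -/
def T1 (a : Alph m n → ℝ) (b : Fin m → ℝ) (p : Alph m n → ℝ) (r : ℝ) : ℤ :=
  ⌊((A1 a b + A5 a b p r + 3 : ℤ) : ℝ) / A4 a b⌋

/-- `ρ = σ^♭`:  for `σ ∈ Ψ_1`, `σ^♭ = θ`; for `σ ∈ Ψ_l` with `l ≥ 2`, `σ^♭` is the unique
`ρ ∈ Ψ_{l-1}` with `ρ_L = (σ_L)^-` and `ρ_y` an initial segment of `σ_y`. -/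
def IsFlat (a : Alph m n → ℝ) (b : Fin m → ℝ) (σ ρ : Wd m n) : Prop :=
  (σ.1.length = 1 ∧ ρ = (([], []) : Wd m n)) ∨
  (2 ≤ σ.1.length ∧ ρ ∈ Psi a b (σ.1.length - 1) ∧ ρ.1 = σ.1.dropLast ∧ sy ρ <+: sy σ)

/-- `Λ_{n,r} := {σ ∈ Ψ^* : E_r(σ^♭) ≥ η̲_r^n > E_r(σ)}`. -/
def Lam (a : Alph m n → ℝ) (b : Fin m → ℝ) (p : Alph m n → ℝ) (r : ℝ) (N : ℕ) :
    Set (Wd m n) :=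
  {σ | σ ∈ PsiStar a b ∧ ∃ ρ : Wd m n, IsFlat a b σ ρ ∧
    etaLo a b p r ^ N ≤ Er a p r ρ ∧ Er a p r σ < etaLo a b p r ^ N}

/-- `S_{n,r} := {σ ∈ Ψ^* : η̲_r^{n+1} ≤ E_r(σ) < η̲_r^n}`. -/
def Snr (a : Alph m n → ℝ) (b : Fin m → ℝ) (p : Alph m n → ℝ) (r : ℝ) (N : ℕ) :
    Set (Wd m n) :=
  {σ | σ ∈ PsiStar a b ∧ etaLo a b p r ^ (N + 1) ≤ Er a p r σ ∧
    Er a p r σ < etaLo a b p r ^ N}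

/-- `G_1(σ) := {ω ∈ S_{n,r} : σ_L ⪯ ω_L and σ_y ⪯ ω_y}`. -/
def G1 (a : Alph m n → ℝ) (b : Fin m → ℝ) (p : Alph m n → ℝ) (r : ℝ) (N : ℕ)
    (σ : Wd m n) : Set (Wd m n) :=
  {ω | ω ∈ Snr a b p r N ∧ σ.1 <+: ω.1 ∧ sy σ <+: sy ω}

/-- `Λ_h(σ) := {ρ ∈ Φ_{l+h} : σ ⪯ ρ}` (componentwise order on pairs). -/
def LamH (a : Alph m n → ℝ) (b : Fin m → ℝ) (σ : Wd m n) (h : ℕ) : Set (Wd m n) :=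
  {ρ | ρ ∈ Psi a b (σ.1.length + h) ∧ σ.1 <+: ρ.1 ∧ σ.2 <+: ρ.2}

/-- `I_{k,r}(t) := Σ_{ω∈Φ_k} E_r(ω)^t`. -/
def Ih (a : Alph m n → ℝ) (b : Fin m → ℝ) (p : Alph m n → ℝ) (r : ℝ) (k : ℕ) (t : ℝ) : ℝ :=
  ∑' ω : Psi a b k, Er a p r ω.1 ^ t

/-- `Υ_n(t,s) := Σ_{σ∈Ψ_n} (p_{σ_L} q_{σ_R})^t a_{σ_L}^s`. -/
def Ups (a : Alph m n → ℝ) (b : Fin m → ℝ) (p : Alph m n → ℝ) (N : ℕ) (t s : ℝ) : ℝ :=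
  ∑' σ : Psi a b N, (pP p σ.1.1 * qP p σ.1.2) ^ t * aP a σ.1.1 ^ s

/-- `τ_0 := ((1,j_0),(n_{j_0},j_0))`. -/
def tau0 (j0 : Fin m) (h : 2 ≤ n j0) : List (Alph m n) :=
  [⟨j0, ⟨0, by omega⟩⟩, ⟨j0, ⟨n j0 - 1, by omega⟩⟩]

/-- `σ̄` is a bar-extension of `σ ∈ Ψ_l`: `σ̄ ∈ Ψ_{l+2}`, `σ̄_L = σ_L ∗ τ_0`, `σ_R ⪯ σ̄_R`. -/
def BarExt (a : Alph m n → ℝ) (b : Fin m → ℝ) (j0 : Fin m) (h : 2 ≤ n j0)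
    (σ σb : Wd m n) : Prop :=
  σb ∈ Psi a b (σ.1.length + 2) ∧ σb.1 = σ.1 ++ tau0 j0 h ∧ σ.2 <+: σb.2

/-- cylinder set `[σ] ⊆ Φ_∞ = G^ℕ × G_y^ℕ`. -/
def Cyl (σ : Wd m n) : Set ((ℕ → Alph m n) × (ℕ → Fin m)) :=
  {x | (∀ i : ℕ, ∀ hi : i < σ.1.length, x.1 i = σ.1.get ⟨i, hi⟩) ∧
       (∀ i : ℕ, ∀ hi : i < σ.2.length, x.2 i = σ.2.get ⟨i, hi⟩)}

/-- the affine map `f_{ij}(x,y) = (a_{ij} x + c_{ij}, b_j y + d_j)`. -/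
def fmap (a : Alph m n → ℝ) (b : Fin m → ℝ) (c : Alph m n → ℝ) (d : Fin m → ℝ)
    (g : Alph m n) : ℝ × ℝ → ℝ × ℝ :=
  fun x => (a g * x.1 + c g, b g.1 * x.2 + d g.1)

/-- `A_{L,σ} = c_{i_1j_1} + Σ_{p≥2} (∏_{h<p} a_{i_hj_h}) c_{i_pj_p}`. -/
def xL (a c : Alph m n → ℝ) : List (Alph m n) → ℝ
  | [] => 0
  | g :: w => c g + a g * xL a c w

/-- `B_{L,σ} = d_{j_1} + Σ_{p≥2} (∏_{h<p} b_{j_h}) d_{j_p}`. -/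
def yL (b d : Fin m → ℝ) : List (Fin m) → ℝ
  | [] => 0
  | j :: τ => d j + b j * yL b d τ

/-- the approximate square `F_σ = [A_{L,σ}, A_{L,σ}+a_{σ_L}] × [B_{L,σ}, B_{L,σ}+b_{σ_y}]`. -/
def Fsq (a c : Alph m n → ℝ) (b d : Fin m → ℝ) (σ : Wd m n) : Set (ℝ × ℝ) :=
  Set.Icc (xL a c σ.1) (xL a c σ.1 + aP a σ.1) ×ˢ
    Set.Icc (yL b d (sy σ)) (yL b d (sy σ) + bP b (sy σ))

/-- the Euclidean distance on `ℝ²`. -/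
def eudist (x y : ℝ × ℝ) : ℝ := Real.sqrt ((x.1 - y.1) ^ 2 + (x.2 - y.2) ^ 2)

/-- the horizontal distance `d_h(S,T) = inf{|x-x'| : (x,y)∈S, (x',y')∈T}`. -/
def dH (S T : Set (ℝ × ℝ)) : ℝ := sInf {e | ∃ x ∈ S, ∃ y ∈ T, e = |x.1 - y.1|}

/-- the (Euclidean) diameter of a subset of `ℝ²`. -/
def euDiam (S : Set (ℝ × ℝ)) : ℝ := sSup {e | ∃ x ∈ S, ∃ y ∈ S, e = eudist x y}

/-- the `N`-th quantization error of order `r`. -/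
def qerr (μ : Measure (ℝ × ℝ)) (r : ℝ) (N : ℕ) : ℝ :=
  sInf {e : ℝ | ∃ α : Finset (ℝ × ℝ), ∃ hα : α.Nonempty, α.card ≤ N ∧
    e = (∫ x, α.inf' hα (fun y => eudist x y ^ r) ∂μ) ^ (1 / r)}

/-- the topological support of a measure on `ℝ²`. -/
def suppSet (μ : Measure (ℝ × ℝ)) : Set (ℝ × ℝ) :=
  {x | ∀ U : Set (ℝ × ℝ), IsOpen U → x ∈ U → μ U ≠ 0}

/-- the dyadic square `[k 2^{-N}, (k+1) 2^{-N}) × [k' 2^{-N}, (k'+1) 2^{-N})`. -/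
def Dy (N : ℕ) (k : ℤ × ℤ) : Set (ℝ × ℝ) :=
  Set.Ico ((k.1 : ℝ) * (2 : ℝ) ^ (-(N : ℤ))) (((k.1 : ℝ) + 1) * (2 : ℝ) ^ (-(N : ℤ))) ×ˢ
    Set.Ico ((k.2 : ℝ) * (2 : ℝ) ^ (-(N : ℤ))) (((k.2 : ℝ) + 1) * (2 : ℝ) ^ (-(N : ℤ)))


/-! Write `ω_y = σ_y ∗ ρ` and `ω_L = σ_L ∗ ε`. The two defining inequalities of `Ψ^*`, one for
`σ` and one for `ω`, compare `a_ε` with the product of the `b`'s along `ρ`. In (i), `ε` is one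
letter and `a̲ ≤ a_ε < b_{ρ^-} ≤ b̄^{|ρ|-1}`, so `|ρ| - 1 < log a̲ / log b̄`. In (ii), if `ρ` were
empty then `b̲ ≤ b_j < a_ε ≤ ā^{|ε|}` for the last letter `j` of `σ_y`, so `|ε| < log b̲ / log ā`.
-/

open Set

theorem prod_map_le_pow_length {R ι : Type*} [CommMonoidWithZero R] [PartialOrder R]
    [ZeroLEOneClass R] [PosMulMono R] {f : ι → R} {r : R} {l : List ι}
    (hf0 : ∀ x ∈ l, 0 ≤ f x) (hf : ∀ x ∈ l, f x ≤ r) : (l.map f).prod ≤ r ^ l.length := by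
  simpa using List.prod_map_le_prod_map₀ f (fun _ => r) hf0 hf

theorem ciInf_mem_of_forall_mem {ι α : Type*} [ConditionallyCompleteLinearOrder α] [Finite ι]
    [Nonempty ι] {f : ι → α} {S : Set α} (h : ∀ i, f i ∈ S) : ⨅ i, f i ∈ S := by
  obtain ⟨i, hi⟩ := exists_eq_ciInf_of_finite (f := f)
  exact hi ▸ h i

theorem ciSup_mem_of_forall_mem {ι α : Type*} [ConditionallyCompleteLinearOrder α] [Finite ι]
    [Nonempty ι] {f : ι → α} {S : Set α} (h : ∀ i, f i ∈ S) : ⨆ i, f i ∈ S := by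
  obtain ⟨i, hi⟩ := exists_eq_ciSup_of_finite (f := f)
  exact hi ▸ h i

theorem lt_floor_log_div_log_add_one {x c : ℝ} {k : ℕ} (hx : 0 < x) (hc : c ∈ Ioo 0 1)
    (h : x < c ^ k) : (k : ℤ) < ⌊Real.log x / Real.log c⌋ + 1 := by
  have hk : (k : ℝ) < Real.log x / Real.log c := by
    rw [lt_div_iff_of_neg (Real.log_neg hc.1 hc.2), ← Real.log_pow]
    exact Real.log_lt_log hx h
  exact Int.lt_add_one_iff.mpr (Int.le_floor.mpr (by exact_mod_cast hk.le))

variable {a : Alph m n → ℝ} {b : Fin m → ℝ}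

theorem aP_append (u v : List (Alph m n)) : aP a (u ++ v) = aP a u * aP a v := by
  simp [aP]

theorem bP_append (u v : List (Fin m)) : bP b (u ++ v) = bP b u * bP b v := by
  simp [bP]

theorem aP_pos (ha : ∀ g, 0 < a g) (w : List (Alph m n)) : 0 < aP a w :=
  List.prod_pos (by simp only [List.mem_map]; rintro _ ⟨g, _, rfl⟩; exact ha g)

theorem bP_pos (hb : ∀ j, 0 < b j) (τ : List (Fin m)) : 0 < bP b τ :=
  List.prod_pos (by simp only [List.mem_map]; rintro _ ⟨j, _, rfl⟩; exact hb j)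

theorem length_sy (σ : Wd m n) : (sy σ).length = σ.1.length + σ.2.length := by
  simp [sy]

theorem mem_PsiStar_iff {σ : Wd m n} :
    σ ∈ PsiStar a b ↔ σ.1 ≠ [] ∧ σ.2 ≠ [] ∧
      aP a σ.1 ≤ bP b (sy σ).dropLast ∧ bP b (sy σ) < aP a σ.1 :=
  ⟨fun ⟨_, h0, rfl, h1, h⟩ => ⟨List.ne_nil_of_length_pos h0, List.ne_nil_of_length_pos h1, h⟩,
    fun ⟨h0, h1, h⟩ => ⟨_, List.length_pos_iff.2 h0, rfl, List.length_pos_iff.2 h1, h⟩⟩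

theorem aLo_lt_bHi_pow (ha : ∀ g, 0 < a g) (hb : ∀ j, 0 < b j) {σ ω : Wd m n}
    {g : Alph m n} {ρ : List (Fin m)} (hσ : bP b (sy σ) < aP a σ.1)
    (hω : aP a ω.1 ≤ bP b (sy ω).dropLast) (hL : ω.1 = σ.1 ++ [g]) (hy : sy ω = sy σ ++ ρ)
    (hρ : ρ ≠ []) : aLo a < bHi b ^ (ρ.length - 1) := by
  have : Nonempty (Alph m n) := ⟨g⟩
  have haLo : aLo a ∈ Ioi 0 := ciInf_mem_of_forall_mem ha
  refine lt_of_mul_lt_mul_left ?_ (bP_pos hb (sy σ)).le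
  calc bP b (sy σ) * aLo a < aP a σ.1 * a g :=
        mul_lt_mul hσ (ciInf_le (finite_range a).bddBelow g) haLo (aP_pos ha _).le
    _ = aP a ω.1 := by rw [hL, aP_append]; simp [aP]
    _ ≤ bP b (sy ω).dropLast := hω
    _ = bP b (sy σ) * bP b ρ.dropLast := by rw [hy, List.dropLast_append_of_ne_nil hρ, bP_append]
    _ ≤ bP b (sy σ) * bHi b ^ (ρ.length - 1) := by
        refine mul_le_mul_of_nonneg_left ?_ (bP_pos hb _).le
        rw [← List.length_dropLast]
        exact prod_map_le_pow_length (fun j _ => (hb j).le)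
          (fun j _ => le_ciSup (finite_range b).bddAbove j)

theorem length_sy_sub_le_A1 (ha : ∀ g, a g ∈ Ioo 0 1) (hb : ∀ j, b j ∈ Ioo 0 1)
    {σ ω : Wd m n} (hσ : σ ∈ PsiStar a b) (hω : ω ∈ PsiStar a b) (hL : σ.1 <+: ω.1)
    (hy : sy σ <+: sy ω) (hlen : ω.1.length = σ.1.length + 1) :
    ((sy ω).length : ℤ) - (sy σ).length ≤ A1 a b := by
  obtain ⟨ρ, hρ⟩ := hy
  obtain ⟨ε, hε⟩ := hL
  obtain ⟨g, rfl⟩ : ∃ g, ε = [g] := List.length_eq_one_iff.mp <| by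
    have := congrArg List.length hε
    simp only [List.length_append] at this
    omega
  have : Nonempty (Alph m n) := ⟨g⟩
  have : Nonempty (Fin m) := ⟨g.1⟩
  have haLo : aLo a ∈ Ioo 0 1 := ciInf_mem_of_forall_mem ha
  have hbHi : bHi b ∈ Ioo 0 1 := ciSup_mem_of_forall_mem hb
  suffices h : aLo a < bHi b ^ (ρ.length - 1) by
    have := lt_floor_log_div_log_add_one haLo.1 hbHi h
    rw [← hρ, List.length_append, A1]
    omega
  rcases eq_or_ne ρ [] with rfl | hρne
  · simpa using haLo.2
  · exact aLo_lt_bHi_pow (fun g => (ha g).1) (fun j => (hb j).1) (mem_PsiStar_iff.mp hσ).2.2.2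
      (mem_PsiStar_iff.mp hω).2.2.1 hε.symm hρ.symm hρne

theorem b_getLast_lt_aHi_pow (ha : ∀ g, 0 < a g) (hb : ∀ j, 0 < b j) {σ : Wd m n}
    {ε : List (Alph m n)} (hσ : aP a σ.1 ≤ bP b (sy σ).dropLast)
    (hε : bP b (sy σ) < aP a (σ.1 ++ ε)) (hne : sy σ ≠ []) :
    b ((sy σ).getLast hne) < aHi a ^ ε.length := by
  refine lt_of_mul_lt_mul_left ?_ (bP_pos hb (sy σ).dropLast).le
  calc bP b (sy σ).dropLast * b ((sy σ).getLast hne) = bP b (sy σ) := by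
        conv_rhs => rw [← List.dropLast_append_getLast hne]
        simp [bP]
    _ < aP a σ.1 * aP a ε := by rwa [← aP_append]
    _ ≤ bP b (sy σ).dropLast * aHi a ^ ε.length :=
        mul_le_mul hσ (prod_map_le_pow_length (fun g _ => (ha g).le)
          (fun g _ => le_ciSup (finite_range a).bddAbove g)) (aP_pos ha ε).le
          (bP_pos hb _).le

theorem length_fst_sub_lt_A2_of_sy_eq (ha : ∀ g, a g ∈ Ioo 0 1) (hb : ∀ j, b j ∈ Ioo 0 1)
    {σ ω : Wd m n} (hσ : σ ∈ PsiStar a b) (hω : ω ∈ PsiStar a b) (hL : σ.1 <+: ω.1)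
    (hy : sy ω = sy σ) : (ω.1.length : ℤ) - σ.1.length < A2 a b := by
  obtain ⟨hσL, -, hσ_le, -⟩ := mem_PsiStar_iff.mp hσ
  obtain ⟨-, -, -, hω_lt⟩ := mem_PsiStar_iff.mp hω
  obtain ⟨ε, hε⟩ := hL
  rw [← hε] at hω_lt ⊢
  have hne : sy σ ≠ [] := by simp [sy, hσL]
  have : Nonempty (Alph m n) := ⟨σ.1.head hσL⟩
  have : Nonempty (Fin m) := ⟨(sy σ).getLast hne⟩
  have hbLo : bLo b ∈ Ioo 0 1 := ciInf_mem_of_forall_mem hb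
  have haHi : aHi a ∈ Ioo 0 1 := ciSup_mem_of_forall_mem ha
  have hlast := b_getLast_lt_aHi_pow (fun g => (ha g).1) (fun j => (hb j).1) hσ_le (hy ▸ hω_lt) hne
  have := lt_floor_log_div_log_add_one hbLo.1 haHi
    ((ciInf_le (finite_range b).bddBelow _).trans_lt hlast)
  rw [List.length_append, A2]
  omega

theorem stmt3_general
    (m : ℕ) (n : Fin m → ℕ) (hn : ∀ j, 1 ≤ n j)
    (a : Alph m n → ℝ) (b : Fin m → ℝ)
    (hab : ∀ g : Alph m n, 0 < a g ∧ a g < b g.1 ∧ b g.1 < 1)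
    (σ ω : Wd m n) (hσ : σ ∈ PsiStar a b) (hω : ω ∈ PsiStar a b)
    (hL : σ.1 <+: ω.1) (hy : sy σ <+: sy ω) :
    (ω.1.length = σ.1.length + 1 →
      σ.1.length + σ.2.length ≤ ω.1.length + ω.2.length ∧
      (ω.1.length + ω.2.length : ℤ) - (σ.1.length + σ.2.length : ℤ) ≤ A1 a b) ∧
    (A2 a b ≤ (ω.1.length : ℤ) - (σ.1.length : ℤ) →
      σ.1.length + σ.2.length + 1 ≤ ω.1.length + ω.2.length) := by
  have ha : ∀ g, a g ∈ Ioo 0 1 := fun g => ⟨(hab g).1, (hab g).2.1.trans (hab g).2.2⟩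
  have hb : ∀ j, b j ∈ Ioo 0 1 := fun j =>
    have hj := hab ⟨j, ⟨0, hn j⟩⟩
    ⟨hj.1.trans hj.2.1, hj.2.2⟩
  have hσy := length_sy σ
  have hωy := length_sy ω
  refine ⟨fun hlen => ⟨by have := hy.length_le; omega, ?_⟩, fun hA2 => ?_⟩
  · have := length_sy_sub_le_A1 ha hb hσ hω hL hy hlen
    omega
  · by_contra hshort
    have := length_fst_sub_lt_A2_of_sy_eq ha hb hσ hω hL (hy.eq_of_length_le (by omega)).symm
    omega

theorem stmt3
    (m : ℕ) (hm : 2 ≤ m) (n : Fin m → ℕ) (hn : ∀ j, 1 ≤ n j)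
    (a : Alph m n → ℝ) (b : Fin m → ℝ)
    (hab : ∀ g : Alph m n, 0 < a g ∧ a g < b g.1 ∧ b g.1 < 1)
    (σ ω : Wd m n) (hσ : σ ∈ PsiStar a b) (hω : ω ∈ PsiStar a b)
    (hL : σ.1 <+: ω.1) (hy : sy σ <+: sy ω) :
    (ω.1.length = σ.1.length + 1 →
      σ.1.length + σ.2.length ≤ ω.1.length + ω.2.length ∧
      (ω.1.length + ω.2.length : ℤ) - (σ.1.length + σ.2.length : ℤ) ≤ A1 a b) ∧
    (A2 a b ≤ (ω.1.length : ℤ) - (σ.1.length : ℤ) →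
      σ.1.length + σ.2.length + 1 ≤ ω.1.length + ω.2.length) :=
  stmt3_general m n hn a b hab σ ω hσ hω hL hy

end

end LGQ
end

section
/- Assume n_j = 1 for every j ∈ G_y. If σ, ω ∈ Ψ^* are such that σ_y and ω_y are comparable, then either (σ_L ⪯ ω_L and σ_y ⪯ ω_y) or (ω_L ⪯ σ_L and ω_y ⪯ σ_y); i.e., one of the corresponding approximate squares contains the other. -/
open Filter MeasureTheory
open scoped BigOperators ENNReal NNReal Topology

namespace LGQ

noncomputable section

variable {m : ℕ} {n : Fin m → ℕ}

/-
With one letter per column, a letter of `G` is determined by its `y`-coordinate, so `σ_L` and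
`ω_L` are comparable as soon as their projections are both initial segments of a common `y`-word.
If `σ_y ⪯ ω_y` but the comparison of the `L`-parts goes the other way, `ω_L ⪯ σ_L`, then strict
inclusion `σ_y ≺ ω_y` would give `σ_y ⪯ (ω_y)^-` and hence, all weights lying in `[0, 1]`,
`b_{(ω_y)^-} ≤ b_{σ_y} < a_{σ_L} ≤ a_{ω_L} ≤ b_{(ω_y)^-}`.
-/

theorem _root_.List.prod_map_le_prod_map_of_prefix {ι R : Type*} [CommMonoidWithZero R]
    [PartialOrder R] [ZeroLEOneClass R] [PosMulMono R] {f : ι → R} {u v : List ι} (h : u <+: v)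
    (h0 : ∀ i ∈ v, 0 ≤ f i) (h1 : ∀ i ∈ v, f i ≤ 1) : (v.map f).prod ≤ (u.map f).prod := by
  obtain ⟨t, rfl⟩ := h
  have ht : (t.map f).prod ≤ 1 := by
    simpa using List.prod_map_le_prod_map₀ f (fun _ => 1)
      (fun i hi => h0 i (List.mem_append_right u hi))
      (fun i hi => h1 i (List.mem_append_right u hi))
  rw [List.map_append, List.prod_append]
  exact mul_le_of_le_one_right
    (List.prod_nonneg fun x hx => by
      obtain ⟨i, hi, rfl⟩ := List.mem_map.1 hx
      exact h0 i (List.mem_append_left t hi)) ht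

theorem _root_.List.prefix_dropLast_of_prefix_of_length_lt {α : Type*} {u v : List α}
    (h : u <+: v) (hl : u.length < v.length) : u <+: v.dropLast :=
  List.prefix_of_prefix_length_le h v.dropLast_prefix (by simp; omega)

theorem _root_.List.prefix_or_prefix_of_map_prefix {α β : Type*} {f : α → β}
    (hf : Function.Injective f) {u v : List α} {w : List β} (hu : u.map f <+: w)
    (hv : v.map f <+: w) : u <+: v ∨ v <+: u := by
  simpa only [List.prefix_map_iff_of_injective hf] using List.prefix_or_prefix_of_prefix hu hv

theorem map_fst_prefix_sy (σ : Wd m n) : σ.1.map Sigma.fst <+: sy σ :=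
  List.prefix_append _ _

theorem sy_eq_of_prefix {a : Alph m n → ℝ} {b : Fin m → ℝ}
    (ha0 : ∀ g, 0 ≤ a g) (ha1 : ∀ g, a g ≤ 1) (hb0 : ∀ j, 0 ≤ b j) (hb1 : ∀ j, b j ≤ 1)
    {σ ω : Wd m n} (hσ : σ ∈ PsiStar a b) (hω : ω ∈ PsiStar a b)
    (hL : ω.1 <+: σ.1) (hy : sy σ <+: sy ω) : sy σ = sy ω := by
  obtain ⟨-, -, -, -, -, hσ_lt⟩ := hσ
  obtain ⟨-, -, -, -, hω_le, -⟩ := hω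
  by_contra hne
  have hdrop : sy σ <+: (sy ω).dropLast :=
    List.prefix_dropLast_of_prefix_of_length_lt hy
      (lt_of_le_of_ne hy.length_le fun hlen => hne (hy.eq_of_length hlen))
  have ha : aP a σ.1 ≤ aP a ω.1 :=
    List.prod_map_le_prod_map_of_prefix hL (fun g _ => ha0 g) (fun g _ => ha1 g)
  have hb : bP b (sy ω).dropLast ≤ bP b (sy σ) :=
    List.prod_map_le_prod_map_of_prefix hdrop (fun j _ => hb0 j) (fun j _ => hb1 j)
  linarith

theorem prefix_or_prefix_of_sy_prefix {a : Alph m n → ℝ} {b : Fin m → ℝ}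
    (ha0 : ∀ g, 0 ≤ a g) (ha1 : ∀ g, a g ≤ 1) (hb0 : ∀ j, 0 ≤ b j) (hb1 : ∀ j, b j ≤ 1)
    (hfst : Function.Injective (Sigma.fst : Alph m n → Fin m))
    {σ ω : Wd m n} (hσ : σ ∈ PsiStar a b) (hω : ω ∈ PsiStar a b) (hy : sy σ <+: sy ω) :
    (σ.1 <+: ω.1 ∧ sy σ <+: sy ω) ∨ (ω.1 <+: σ.1 ∧ sy ω <+: sy σ) := by
  rcases List.prefix_or_prefix_of_map_prefix hfst ((map_fst_prefix_sy σ).trans hy)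
      (map_fst_prefix_sy ω) with hL | hL
  · exact Or.inl ⟨hL, hy⟩
  · exact Or.inr ⟨hL, (sy_eq_of_prefix ha0 ha1 hb0 hb1 hσ hω hL hy).symm ▸ List.prefix_refl _⟩

theorem stmt5_general
    (m : ℕ) (n : Fin m → ℕ)
    (a : Alph m n → ℝ) (b : Fin m → ℝ)
    (hab : ∀ g : Alph m n, 0 < a g ∧ a g < b g.1 ∧ b g.1 < 1)
    (h1 : ∀ j : Fin m, n j = 1)
    (σ ω : Wd m n) (hσ : σ ∈ PsiStar a b) (hω : ω ∈ PsiStar a b)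
    (hy : sy σ <+: sy ω ∨ sy ω <+: sy σ) :
    (σ.1 <+: ω.1 ∧ sy σ <+: sy ω) ∨ (ω.1 <+: σ.1 ∧ sy ω <+: sy σ) := by
  have hfst : Function.Injective (Sigma.fst : Alph m n → Fin m) :=
    @Sigma.fst_injective _ _ fun j => by rw [h1 j]; infer_instance
  have hb : ∀ j, 0 < b j ∧ b j < 1 := fun j =>
    let ⟨ha_pos, ha_lt, hb_lt⟩ := hab ⟨j, ⟨0, by rw [h1 j]; exact Nat.one_pos⟩⟩
    ⟨ha_pos.trans ha_lt, hb_lt⟩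
  have ha0 : ∀ g, 0 ≤ a g := fun g => (hab g).1.le
  have ha1 : ∀ g, a g ≤ 1 := fun g => ((hab g).2.1.trans (hab g).2.2).le
  have hb0 : ∀ j, 0 ≤ b j := fun j => (hb j).1.le
  have hb1 : ∀ j, b j ≤ 1 := fun j => (hb j).2.le
  rcases hy with hy | hy
  · exact prefix_or_prefix_of_sy_prefix ha0 ha1 hb0 hb1 hfst hσ hω hy
  · exact (prefix_or_prefix_of_sy_prefix ha0 ha1 hb0 hb1 hfst hω hσ hy).symm

theorem stmt5
    (m : ℕ) (hm : 2 ≤ m) (n : Fin m → ℕ) (hn : ∀ j, 1 ≤ n j)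
    (a : Alph m n → ℝ) (b : Fin m → ℝ)
    (hab : ∀ g : Alph m n, 0 < a g ∧ a g < b g.1 ∧ b g.1 < 1)
    (h1 : ∀ j : Fin m, n j = 1)
    (σ ω : Wd m n) (hσ : σ ∈ PsiStar a b) (hω : ω ∈ PsiStar a b)
    (hy : sy σ <+: sy ω ∨ sy ω <+: sy σ) :
    (σ.1 <+: ω.1 ∧ sy σ <+: sy ω) ∨ (ω.1 <+: σ.1 ∧ sy ω <+: sy σ) :=
  stmt5_general m n a b hab h1 σ ω hσ hω hy

end

end LGQ
end

section
/- Assume n_{j_0} ≥ 2 for some j_0 ∈ G_y and put τ_0 := ((1,j_0),(n_{j_0},j_0)). Let n ≥ 4/A_4 and let σ, ω ∈ Λ_{n,r} be distinct with σ_L ⪯ ω_L and |ω_L| − |σ_L| ≤ 2. Then for any bar-extensions σ̄ of σ and ω̄ of ω, the words σ̄_y and ω̄_y are incomparable. -/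
open Filter MeasureTheory
open scoped BigOperators ENNReal NNReal Topology

namespace LGQ

noncomputable section

variable {m : ℕ} {n : Fin m → ℕ}

/-! If the bar-extensions had comparable `y`-words, cancelling the common block `τ_0` makes
`σ_y` and `ω_y` comparable: the at most two extra letters of `ω_L` are forced to equal `j_0`,
so they commute with the `y`-word `j_0 j_0` of `τ_0`. The window `b_{σ_y} < a_{σ_L} ≤ b_{(σ_y)^-}`
then forces `σ_y ⪯ ω_y`. If `σ_L = ω_L` this gives `σ = ω`; otherwise the parent `ω^♭` extends
`σ`, and since `E_r` decreases along extensions, `η̲_r^n ≤ E_r(ω^♭) ≤ E_r(σ) < η̲_r^n`. -/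

open Relation

section Words

variable {α : Type*}

lemma prod_map_mem_Icc {f : α → ℝ} (hf : ∀ x, f x ∈ Set.Icc (0 : ℝ) 1) (w : List α) :
    (w.map f).prod ∈ Set.Icc (0 : ℝ) 1 := by
  induction w with
  | nil => simp
  | cons x w ih =>
    rw [List.map_cons, List.prod_cons]
    exact ⟨mul_nonneg (hf x).1 ih.1, mul_le_one₀ (hf x).2 ih.1 ih.2⟩

lemma prod_map_le_of_prefix {f : α → ℝ} (hf : ∀ x, f x ∈ Set.Icc (0 : ℝ) 1) {X Y : List α}
    (h : X <+: Y) : (Y.map f).prod ≤ (X.map f).prod := by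
  obtain ⟨s, rfl⟩ := h
  rw [List.map_append, List.prod_append]
  exact mul_le_of_le_one_right (prod_map_mem_Icc hf X).1 (prod_map_mem_Icc hf s).2

lemma prefix_dropLast_of_prefix_of_ne {X Y : List α} (h : X <+: Y) (hne : X ≠ Y) :
    X <+: Y.dropLast := by
  obtain ⟨s, rfl⟩ := h
  rcases s with _ | ⟨x, s⟩
  · simp at hne
  · rw [List.dropLast_append_cons]
    exact List.prefix_append _ _

lemma symmGen_prefix_of_prefix {P Q X Y : List α} (hP : P <+: X) (hQ : Q <+: Y)
    (h : SymmGen (· <+: ·) X Y) : SymmGen (· <+: ·) P Q := by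
  rcases h with h | h
  · exact List.prefix_or_prefix_of_prefix (hP.trans h) hQ
  · exact List.prefix_or_prefix_of_prefix hP (hQ.trans h)

lemma symmGen_prefix_append_left_iff (X : List α) {A B : List α} :
    SymmGen (· <+: ·) (X ++ A) (X ++ B) ↔ SymmGen (· <+: ·) A B := by
  simp only [SymmGen, List.prefix_append_right_inj]

/-- The short word `t` is forced to be a power of `c`, hence commutes with `c^k`. -/
lemma symmGen_prefix_of_replicate_append {c : α} {k : ℕ} {t X Y : List α}
    (ht : t.length ≤ k)
    (h : SymmGen (· <+: ·) (List.replicate k c ++ X) (t ++ (List.replicate k c ++ Y))) :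
    SymmGen (· <+: ·) X (t ++ Y) := by
  have htk : t <+: List.replicate k c := by
    rcases symmGen_prefix_of_prefix (List.prefix_append _ _) (List.prefix_append _ _) h with h' | h'
    · rw [← h'.eq_of_length (le_antisymm h'.length_le (by simpa using ht))]
    · exact h'
  obtain ⟨i, -, rfl⟩ := List.sublist_replicate_iff.mp htk.sublist
  rwa [← List.append_assoc, List.replicate_append_replicate, Nat.add_comm,
    ← List.replicate_append_replicate, List.append_assoc,
    symmGen_prefix_append_left_iff] at h

end Words

variable {a : Alph m n → ℝ} {b : Fin m → ℝ}

lemma sy_of_barExt {j0 : Fin m} {hj0 : 2 ≤ n j0} {σ σb : Wd m n}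
    (h : BarExt a b j0 hj0 σ σb) :
    sy σb = σ.1.map Sigma.fst ++ (List.replicate 2 j0 ++ σb.2) := by
  simp [sy, h.2.1, tau0]

lemma symmGen_sy_of_barExt {j0 : Fin m} {hj0 : 2 ≤ n j0} {σ ω σb ωb : Wd m n} {t : List (Alph m n)}
    (hσb : BarExt a b j0 hj0 σ σb) (hωb : BarExt a b j0 hj0 ω ωb)
    (ht : σ.1 ++ t = ω.1) (htlen : t.length ≤ 2)
    (h : SymmGen (· <+: ·) (sy σb) (sy ωb)) :
    SymmGen (· <+: ·) (sy σ) (sy ω) := by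
  have hωb' : sy ωb = σ.1.map Sigma.fst ++ (t.map Sigma.fst ++ (List.replicate 2 j0 ++ ωb.2)) := by
    rw [sy_of_barExt hωb, ← ht, List.map_append, List.append_assoc]
  have hω : sy ω = σ.1.map Sigma.fst ++ (t.map Sigma.fst ++ ω.2) := by
    rw [sy, ← ht, List.map_append, List.append_assoc]
  rw [sy_of_barExt hσb, hωb', symmGen_prefix_append_left_iff] at h
  rw [sy, hω, symmGen_prefix_append_left_iff]
  exact symmGen_prefix_of_prefix hσb.2.2 ((List.prefix_append_right_inj _).mpr hωb.2.2)
    (symmGen_prefix_of_replicate_append (by simpa using htlen) h)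

/-- Extending `σ_L` can only shrink `a`, so by the window inequalities the `y`-word cannot
get shorter. -/
lemma sy_prefix_of_mem_Psi (ha : ∀ g, a g ∈ Set.Icc (0 : ℝ) 1) (hb : ∀ j, b j ∈ Set.Icc (0 : ℝ) 1)
    {σ ω : Wd m n} {l l' : ℕ} (hσ : σ ∈ Psi a b l) (hω : ω ∈ Psi a b l')
    (hL : σ.1 <+: ω.1) (h : SymmGen (· <+: ·) (sy σ) (sy ω)) : sy σ <+: sy ω := by
  rcases h with h | h
  · exact h
  by_contra hne
  have hdrop := prefix_dropLast_of_prefix_of_ne h fun he => hne (he ▸ List.prefix_refl _)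
  have : bP b (sy ω) < bP b (sy ω) :=
    calc bP b (sy ω) < aP a ω.1 := hω.2.2.2
      _ ≤ aP a σ.1 := prod_map_le_of_prefix ha hL
      _ ≤ bP b (sy σ).dropLast := hσ.2.2.1
      _ ≤ bP b (sy ω) := prod_map_le_of_prefix hb hdrop
  exact this.false

variable {p : Alph m n → ℝ}

lemma qf_mem_Icc (hp : ∀ g, 0 ≤ p g) (hp1 : ∑ g : Alph m n, p g = 1) (j : Fin m) :
    qf p j ∈ Set.Icc (0 : ℝ) 1 := by
  have hsum : ∑ j' : Fin m, qf p j' = 1 := by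
    rw [← hp1, Fintype.sum_sigma]
    rfl
  refine ⟨Finset.sum_nonneg fun i _ => hp _, hsum ▸ ?_⟩
  exact Finset.single_le_sum (f := qf p) (fun j' _ => Finset.sum_nonneg fun i _ => hp _)
    (Finset.mem_univ j)

lemma pP_le_qP (hp : ∀ g, 0 ≤ p g) (w : List (Alph m n)) : pP p w ≤ qP p (w.map Sigma.fst) := by
  induction w with
  | nil => simp [pP, qP]
  | cons g w ih =>
    simp only [pP, qP, List.map_cons, List.prod_cons] at ih ⊢
    have hg : p g ≤ qf p g.1 :=
      Finset.single_le_sum (f := fun i => p ⟨g.1, i⟩) (fun i _ => hp _) (Finset.mem_univ g.2)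
    exact mul_le_mul hg ih (List.prod_nonneg fun x hx => by
      obtain ⟨g', -, rfl⟩ := List.mem_map.1 hx; exact hp g') ((hp g).trans hg)

lemma Er_le_of_prefix (ha : ∀ g, a g ∈ Set.Icc (0 : ℝ) 1) (hp : ∀ g, 0 ≤ p g)
    (hp1 : ∑ g : Alph m n, p g = 1) {r : ℝ} (hr : 0 ≤ r) {σ ρ : Wd m n}
    (hL : σ.1 <+: ρ.1) (hy : sy σ <+: sy ρ) : Er a p r ρ ≤ Er a p r σ := by
  obtain ⟨s, hs⟩ := hL
  obtain ⟨w, hw⟩ : σ.2 <+: s.map Sigma.fst ++ ρ.2 := by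
    rwa [sy, sy, ← hs, List.map_append, List.append_assoc, List.prefix_append_right_inj] at hy
  have hq := qf_mem_Icc hp hp1
  have hpP : ∀ u, 0 ≤ pP p u := fun u => List.prod_nonneg fun x hx => by
    obtain ⟨g, -, rfl⟩ := List.mem_map.1 hx; exact hp g
  have haP := prod_map_mem_Icc ha
  have hqP := prod_map_mem_Icc hq
  have hpa : 0 ≤ pP p σ.1 * aP a σ.1 ^ r := mul_nonneg (hpP _) (Real.rpow_nonneg (haP _).1 r)
  calc Er a p r ρ
      = pP p σ.1 * aP a σ.1 ^ r * (pP p s * qP p ρ.2 * aP a s ^ r) := by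
        simp only [Er, ← hs, pP, aP, List.map_append, List.prod_append,
          Real.mul_rpow (haP _).1 (haP _).1]
        ring
    _ ≤ pP p σ.1 * aP a σ.1 ^ r * (qP p (s.map Sigma.fst) * qP p ρ.2 * 1) := by
        gcongr
        · exact Real.rpow_nonneg (haP _).1 r
        · exact mul_nonneg (hqP _).1 (hqP _).1
        · exact (hqP _).1
        · exact pP_le_qP hp s
        · exact Real.rpow_le_one (haP _).1 (haP _).2 hr
    _ = pP p σ.1 * aP a σ.1 ^ r * (qP p σ.2 * qP p w) := by
        simp only [qP, mul_one, ← List.prod_append, ← List.map_append, hw]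
    _ ≤ Er a p r σ := by
        rw [Er, mul_right_comm _ (qP p σ.2)]
        exact mul_le_mul_of_nonneg_left (mul_le_of_le_one_right (hqP _).1 (hqP _).2) hpa

lemma eq_of_fst_eq_of_sy_eq {σ ω : Wd m n} (hL : σ.1 = ω.1) (hy : sy σ = sy ω) : σ = ω := by
  rw [sy, sy, hL] at hy
  exact Prod.ext hL (List.append_cancel_left hy)

lemma not_sy_prefix_of_mem_Lam (ha : ∀ g, a g ∈ Set.Icc (0 : ℝ) 1)
    (hb : ∀ j, b j ∈ Set.Icc (0 : ℝ) 1) (hp : ∀ g, 0 ≤ p g) (hp1 : ∑ g : Alph m n, p g = 1)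
    {r : ℝ} (hr : 0 ≤ r) {N : ℕ} {σ ω : Wd m n} (hσ : σ ∈ Lam a b p r N)
    (hω : ω ∈ Lam a b p r N) (hL : σ.1 <+: ω.1) (hne : σ.1 ≠ ω.1) : ¬ sy σ <+: sy ω := by
  intro hy
  obtain ⟨⟨l, hl, hσΨ⟩, -, -, -, hσE⟩ := hσ
  obtain ⟨-, ρ, hflat, hρE, -⟩ := hω
  have hlen : σ.1.length < ω.1.length :=
    lt_of_le_of_ne hL.length_le fun h => hne (hL.eq_of_length h)
  rcases hflat with ⟨hω1, -⟩ | ⟨-, hρΨ, hρL, hρy⟩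
  · have := hσΨ.1
    omega
  have hσρL : σ.1 <+: ρ.1 := hρL ▸ prefix_dropLast_of_prefix_of_ne hL hne
  have hσρy : sy σ <+: sy ρ :=
    sy_prefix_of_mem_Psi ha hb hσΨ hρΨ hσρL (List.prefix_or_prefix_of_prefix hy hρy)
  linarith [Er_le_of_prefix ha hp hp1 hr hσρL hσρy]

theorem stmt7_general
    (m : ℕ) (n : Fin m → ℕ) (hn : ∀ j, 1 ≤ n j)
    (a : Alph m n → ℝ) (b : Fin m → ℝ)
    (hab : ∀ g : Alph m n, 0 < a g ∧ a g < b g.1 ∧ b g.1 < 1)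
    (p : Alph m n → ℝ) (hp : ∀ g, 0 < p g) (hp1 : ∑ g : Alph m n, p g = 1)
    (r : ℝ) (hr : 0 < r)
    (j0 : Fin m) (hj0 : 2 ≤ n j0)
    (N : ℕ)
    (σ ω : Wd m n) (hσ : σ ∈ Lam a b p r N) (hω : ω ∈ Lam a b p r N)
    (hne : σ ≠ ω) (hL : σ.1 <+: ω.1) (hlen : ω.1.length ≤ σ.1.length + 2)
    (σb ωb : Wd m n) (hσb : BarExt a b j0 hj0 σ σb) (hωb : BarExt a b j0 hj0 ω ωb) :
    ¬ sy σb <+: sy ωb ∧ ¬ sy ωb <+: sy σb := by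
  have ha : ∀ g, a g ∈ Set.Icc (0 : ℝ) 1 := fun g =>
    ⟨(hab g).1.le, ((hab g).2.1.trans (hab g).2.2).le⟩
  have hb : ∀ j, b j ∈ Set.Icc (0 : ℝ) 1 := fun j =>
    have hj := hab ⟨j, ⟨0, hn j⟩⟩
    ⟨(hj.1.trans hj.2.1).le, hj.2.2.le⟩
  rw [← not_or]
  intro hbar
  obtain ⟨t, ht⟩ := hL
  have htlen : t.length ≤ 2 := by
    rw [← ht, List.length_append] at hlen
    omega
  have hy := symmGen_sy_of_barExt hσb hωb ht htlen hbar
  obtain ⟨l, -, hσΨ⟩ := hσ.1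
  obtain ⟨l', -, hωΨ⟩ := hω.1
  have hσω := sy_prefix_of_mem_Psi ha hb hσΨ hωΨ ⟨t, ht⟩ hy
  by_cases hLeq : σ.1 = ω.1
  · have hωσ := sy_prefix_of_mem_Psi ha hb hωΨ hσΨ (hLeq ▸ List.prefix_refl _) hy.symm
    exact hne (eq_of_fst_eq_of_sy_eq hLeq (hσω.eq_of_length (hσω.length_le.antisymm hωσ.length_le)))
  · exact not_sy_prefix_of_mem_Lam ha hb (fun g => (hp g).le) hp1 hr.le hσ hω ⟨t, ht⟩ hLeq hσω

theorem stmt7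
    (m : ℕ) (hm : 2 ≤ m) (n : Fin m → ℕ) (hn : ∀ j, 1 ≤ n j)
    (a : Alph m n → ℝ) (b : Fin m → ℝ)
    (hab : ∀ g : Alph m n, 0 < a g ∧ a g < b g.1 ∧ b g.1 < 1)
    (p : Alph m n → ℝ) (hp : ∀ g, 0 < p g) (hp1 : ∑ g : Alph m n, p g = 1)
    (r : ℝ) (hr : 0 < r)
    (j0 : Fin m) (hj0 : 2 ≤ n j0)
    (N : ℕ) (hN : 4 / A4 a b ≤ (N : ℝ))
    (σ ω : Wd m n) (hσ : σ ∈ Lam a b p r N) (hω : ω ∈ Lam a b p r N)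
    (hne : σ ≠ ω) (hL : σ.1 <+: ω.1) (hlen : ω.1.length ≤ σ.1.length + 2)
    (σb ωb : Wd m n) (hσb : BarExt a b j0 hj0 σ σb) (hωb : BarExt a b j0 hj0 ω ωb) :
    ¬ sy σb <+: sy ωb ∧ ¬ sy ωb <+: sy σb :=
  stmt7_general m n hn a b hab p hp hp1 r hr j0 hj0 N σ ω hσ hω hne hL hlen σb ωb hσb hωb

end

end LGQ
end
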